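/- arXiv:quant-ph/0003136 — 3 statements merged into one kernel-verified Lean document; each statement's English description precedes it below -/
import Mathlib

section
/- If 0 < A ≤ M/2 − c√M (for the constant c as above), then φ_A(M) = ((M−2A+1)/(M−A+1))·C(M,A) ≥ (1/M)·(M/A)^A, and consequently φ_A(M) ≥ 2^A whenever (M/(2A))^A ≥ M. -/
/-!
Since `C(M, A - 1) · (M - A + 1) = C(M, A) · A`, the difference `C(M, A) - C(M, A - 1)` is the
multiple `(M - 2A + 1)/(M - A + 1)` of `C(M, A)`, and this ratio is at least `1/M` as soon as
`2A ≤ M`. Together with `C(M, A) = ∏_{i<A} (M - i)/(A - i) ≥ (M/A)^A` this gives the lower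
bound, and `(M/A)^A = 2^A (M/(2A))^A ≥ 2^A M` gives the last claim.
-/

namespace Nat

variable {α : Type*} [Field α] [LinearOrder α] [IsStrictOrderedRing α]

theorem succ_choose_succ_eq_div_mul_choose (m k : ℕ) :
    ((m + 1).choose (k + 1) : α) = ((m + 1 : α) / (k + 1)) * m.choose k := by
  rw [div_mul_eq_mul_div, eq_div_iff (by positivity)]
  exact_mod_cast (add_one_mul_choose_eq m k).symm

theorem div_pow_le_choose {n k : ℕ} (hkn : k ≤ n) : ((n : α) / k) ^ k ≤ n.choose k := by
  induction k generalizing n with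
  | zero => simp
  | succ k ih =>
    obtain ⟨m, rfl⟩ : ∃ m, n = m + 1 := ⟨n - 1, by omega⟩
    have hkm : k ≤ m := by omega
    have hpow : ((m + 1 : α) / (k + 1)) ^ k ≤ m.choose k := by
      rcases k.eq_zero_or_pos with rfl | hk
      · simp
      have hkm' : (k : α) ≤ m := mod_cast hkm
      have hbase : (m + 1 : α) / (k + 1) ≤ m / k := by
        rw [div_le_div_iff₀ (by positivity) (by positivity)]
        linarith
      exact (pow_le_pow_left₀ (by positivity) hbase k).trans (ih hkm)
    rw [succ_choose_succ_eq_div_mul_choose, _root_.pow_succ']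
    push_cast
    gcongr

theorem choose_sub_choose_pred_eq {K : Type*} [Field K] [CharZero K] {n k : ℕ} (hk : 0 < k)
    (hkn : k ≤ n) :
    (n.choose k : K) - n.choose (k - 1) = ((n - 2 * k + 1) / (n - k + 1)) * n.choose k := by
  obtain ⟨j, rfl⟩ : ∃ j, k = j + 1 := ⟨k - 1, by omega⟩
  have hrec : (n.choose (j + 1) : K) * (j + 1) = n.choose j * (n - j) := by
    have := congrArg (Nat.cast : ℕ → K) (choose_succ_right_eq n j)
    push_cast [show j ≤ n by omega] at this
    exact this
  have hne : (n : K) - j ≠ 0 := by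
    rw [sub_ne_zero]
    exact_mod_cast (by omega : n ≠ j)
  rw [add_tsub_cancel_right]
  push_cast
  rw [show (n : K) - (j + 1) + 1 = n - j by ring]
  field_simp
  linear_combination hrec

end Nat

theorem one_div_le_sub_two_mul_add_one_div {α : Type*} [Field α] [LinearOrder α]
    [IsStrictOrderedRing α] {m a : α} (ha : 1 ≤ a) (hma : 2 * a ≤ m) :
    1 / m ≤ (m - 2 * a + 1) / (m - a + 1) := by
  rw [div_le_div_iff₀ (by linarith) (by linarith)]
  nlinarith

theorem two_pow_le_one_div_mul_div_pow {m : ℝ} {a : ℕ} (hm : 0 < m) (h : m ≤ (m / (2 * a)) ^ a) :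
    (2 : ℝ) ^ a ≤ 1 / m * (m / a) ^ a := by
  have hsplit : (m / a) ^ a = 2 ^ a * (m / (2 * a)) ^ a := by
    rw [← mul_pow, mul_div_assoc', mul_div_mul_left _ _ two_ne_zero]
  rw [hsplit, one_div_mul_eq_div, le_div_iff₀ hm]
  gcongr

/-- there is an absolute constant c > 0 (the one from the
    minimization of φ_B) such that if 0 < A ≤ M/2 − c·√M, then
    φ_A(M) = ((M−2A+1)/(M−A+1))·C(M,A) ≥ (1/M)·(M/A)^A, and consequently
    φ_A(M) ≥ 2^A whenever (M/(2A))^A ≥ M. -/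
theorem stmt3 :
    ∃ c : ℝ, 0 < c ∧
      ∀ M A : ℕ, 0 < A → (A : ℝ) ≤ (M : ℝ) / 2 - c * Real.sqrt M →
        ((M.choose A : ℝ) - (M.choose (A - 1) : ℝ) =
            (((M : ℝ) - 2 * A + 1) / ((M : ℝ) - A + 1)) * (M.choose A : ℝ)) ∧
        (1 / (M : ℝ)) * ((M : ℝ) / A) ^ A ≤
            (((M : ℝ) - 2 * A + 1) / ((M : ℝ) - A + 1)) * (M.choose A : ℝ) ∧
        (((M : ℝ) / (2 * A)) ^ A ≥ (M : ℝ) →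
          (2 : ℝ) ^ A ≤
            (((M : ℝ) - 2 * A + 1) / ((M : ℝ) - A + 1)) * (M.choose A : ℝ)) := by
  refine ⟨1, one_pos, fun M A hA hle => ?_⟩
  have hA1 : (1 : ℝ) ≤ A := mod_cast hA
  have h2A : 2 * (A : ℝ) ≤ M := by nlinarith [Real.sqrt_nonneg M]
  have hAM : A ≤ M := by exact_mod_cast (by linarith : (A : ℝ) ≤ M)
  have hM : (0 : ℝ) < M := by linarith
  have hbound : 1 / (M : ℝ) * (M / A) ^ A ≤ ((M - 2 * A + 1) / (M - A + 1)) * M.choose A :=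
    mul_le_mul (one_div_le_sub_two_mul_add_one_div hA1 h2A) (Nat.div_pow_le_choose hAM)
      (by positivity) (div_nonneg (by linarith) (by linarith))
  exact ⟨Nat.choose_sub_choose_pred_eq hA hAM, hbound,
    fun hpow => (two_pow_le_one_div_mul_div_pow hM hpow).trans hbound⟩
end

section
/- Let λ be a partition of n whose first row has length n − ℓ with ℓ < n/2, and let λ₁ be the partition of n−1 obtained by deleting the last cell of the first row of λ. Then dim ρ_{λ₁} ≥ ((n − 2ℓ)/n) · dim ρ_λ, where dim ρ_μ denotes the number of standard Young tableaux of shape μ. -/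
/-- The number of standard Young tableaux of shape `μ`: bijective fillings of
    the cells of `μ` with `0, …, μ.card − 1` that strictly increase along rows
    and columns. This equals the dimension of the irreducible representation
    `ρ_μ` of the symmetric group. -/
noncomputable def numSYT (μ : YoungDiagram) : ℕ :=
  Nat.card {f : μ.cells → Fin μ.card //
    Function.Bijective f ∧
    ∀ c₁ c₂ : μ.cells, (c₁ : ℕ × ℕ).1 ≤ (c₂ : ℕ × ℕ).1 →
      (c₁ : ℕ × ℕ).2 ≤ (c₂ : ℕ × ℕ).2 → c₁ ≠ c₂ → f c₁ < f c₂}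

/-- Value adjustment after deleting the entry `m`. -/
private def adjv (m v : ℕ) : ℕ := if v < m then v else v - 1

private lemma adjv_lt_adjv {m v₁ v₂ : ℕ} (h : v₁ < v₂) (h₁ : v₁ ≠ m) (h₂ : v₂ ≠ m) :
    adjv m v₁ < adjv m v₂ := by
  unfold adjv; split_ifs <;> omega

private lemma adjv_inj {m v₁ v₂ : ℕ} (h₁ : v₁ ≠ m) (h₂ : v₂ ≠ m)
    (h : adjv m v₁ = adjv m v₂) : v₁ = v₂ := by
  unfold adjv at h; split_ifs at h <;> omega

private lemma adjv_lt {m v N : ℕ} (hv : v < N) (hne : v ≠ m) (hm : m < N) :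
    adjv m v < N - 1 := by
  unfold adjv; split_ifs <;> omega

/-- Cell relocation: delete cell `(0,j)` and shift the later cells of row 0 left. -/
private def phiC (j : ℕ) (c : ℕ × ℕ) : ℕ × ℕ :=
  if c.1 = 0 ∧ j ≤ c.2 then (0, c.2 + 1) else c

private lemma key_ineq (n ℓ : ℕ) (hℓ : 2 * ℓ < n)
    (lam lam₁ : YoungDiagram)
    (hcard : lam.card = n)
    (hrow : lam.rowLen 0 = n - ℓ)
    (hdel : lam₁.cells = lam.cells.erase (0, lam.rowLen 0 - 1)) :
    (n - 2 * ℓ) * numSYT lam ≤ n * numSYT lam₁ := by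
  have hℓn : ℓ < n := by omega
  -- membership in lam₁
  have hmem₁ : ∀ c : ℕ × ℕ, c ∈ lam₁.cells ↔ c ∈ lam.cells ∧ c ≠ (0, n - ℓ - 1) := by
    intro c
    rw [hdel, Finset.mem_erase, hrow, and_comm]
  have hmemlam : ∀ i j : ℕ, (i, j) ∈ lam.cells ↔ j < lam.rowLen i := by
    intro i j
    rw [YoungDiagram.mem_cells, YoungDiagram.mem_iff_lt_rowLen]
  -- corner is a cell
  have hcorner : (0, n - ℓ - 1) ∈ lam.cells := by
    rw [hmemlam, hrow]; omega
  have hcard₁ : lam₁.card = n - 1 := by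
    show lam₁.cells.card = n - 1
    rw [hdel, Finset.card_erase_of_mem (by rwa [hrow])]
    show lam.card - 1 = n - 1
    rw [hcard]
  -- second row is short
  have hrow1 : lam.rowLen 1 ≤ ℓ := by
    by_contra hcon
    have hsub : lam.row 0 ∪ lam.row 1 ⊆ lam.cells := by
      intro c hc
      rcases Finset.mem_union.1 hc with h | h <;>
        · rw [YoungDiagram.mem_row_iff] at h
          exact (YoungDiagram.mem_cells c).2 h.1
    have hdisj : Disjoint (lam.row 0) (lam.row 1) := by
      rw [Finset.disjoint_left]
      intro c h0 h1
      rw [YoungDiagram.mem_row_iff] at h0 h1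
      omega
    have := Finset.card_le_card hsub
    rw [Finset.card_union_of_disjoint hdisj] at this
    rw [← YoungDiagram.rowLen_eq_card, ← YoungDiagram.rowLen_eq_card] at this
    have hc' : lam.cells.card = n := hcard
    omega
  -- cells below the first row have column < ℓ
  have hlow : ∀ i j : ℕ, (i, j) ∈ lam.cells → 1 ≤ i → j < ℓ := by
    intro i j hij hi
    have h1 : (1, j) ∈ lam := lam.up_left_mem hi le_rfl ((YoungDiagram.mem_cells _).1 hij)
    have := YoungDiagram.mem_iff_lt_rowLen.1 h1
    omega
  -- membership of the marked cell
  have cellJmem : ∀ k : Fin (n - 2 * ℓ), (0, ℓ + k.1) ∈ lam.cells := by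
    intro k
    have := k.2
    rw [hmemlam, hrow]; omega
  -- the relocated cell is a cell of lam
  have pcmem : ∀ (k : Fin (n - 2 * ℓ)) (p : ℕ × ℕ), p ∈ lam₁.cells →
      phiC (ℓ + k.1) p ∈ lam.cells := by
    rintro k ⟨a, b⟩ hc
    rw [hmem₁] at hc
    obtain ⟨hc1, hc2⟩ := hc
    unfold phiC
    split_ifs with h
    · obtain ⟨ha, hb⟩ := h
      simp only at ha hb
      subst ha
      rw [hmemlam] at hc1 ⊢
      rw [hrow] at hc1 ⊢
      have : b ≠ n - ℓ - 1 := fun hh => hc2 (by rw [hh])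
      omega
    · exact hc1
  -- the relocated cell is not the marked cell
  have pcne : ∀ (k : Fin (n - 2 * ℓ)) (p : ℕ × ℕ), p ∈ lam₁.cells →
      phiC (ℓ + k.1) p ≠ (0, ℓ + k.1) := by
    rintro k ⟨a, b⟩ _
    unfold phiC
    split_ifs with h
    · intro hh
      simp only [Prod.mk.injEq] at hh
      simp only at h
      omega
    · intro hh
      simp only at h
      apply h
      simp only [Prod.mk.injEq] at hh
      exact ⟨hh.1, le_of_eq hh.2.symm⟩
  -- relocation is injective
  have pcinj : ∀ (k : Fin (n - 2 * ℓ)) (p₁ p₂ : ℕ × ℕ),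
      phiC (ℓ + k.1) p₁ = phiC (ℓ + k.1) p₂ → p₁ = p₂ := by
    rintro k ⟨a₁, b₁⟩ ⟨a₂, b₂⟩ h
    unfold phiC at h
    split_ifs at h with h1 h2 h2 <;>
      simp only [Prod.mk.injEq] at h ⊢ <;> simp only at h1 h2 <;> omega
  -- relocation preserves the order
  have pcord : ∀ (k : Fin (n - 2 * ℓ)) (p₁ p₂ : ℕ × ℕ), p₁ ∈ lam₁.cells → p₂ ∈ lam₁.cells →
      p₁.1 ≤ p₂.1 → p₁.2 ≤ p₂.2 →
      (phiC (ℓ + k.1) p₁).1 ≤ (phiC (ℓ + k.1) p₂).1 ∧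
      (phiC (ℓ + k.1) p₁).2 ≤ (phiC (ℓ + k.1) p₂).2 := by
    rintro k ⟨a₁, b₁⟩ ⟨a₂, b₂⟩ hm₁ hm₂ h1 h2
    simp only at h1 h2
    have hc₂' := ((hmem₁ _).1 hm₂).1
    unfold phiC
    split_ifs with g1 g2 g2 <;> simp only at g1 g2 ⊢
    · omega
    · -- c₁ moved, c₂ not: impossible
      exfalso
      rcases Nat.eq_zero_or_pos a₂ with h | h
      · omega
      · have := hlow a₂ b₂ hc₂' h
        omega
    · omega
    · omega
  clear hdel
  -- the tableau transformation, with `min` making it well-defined without injectivity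
  set G : (lam.cells → Fin lam.card) → Fin (n - 2 * ℓ) → lam₁.cells → Fin lam₁.card :=
    fun T k c =>
      ⟨min (adjv (T ⟨(0, ℓ + k.1), cellJmem k⟩).1
            (T ⟨phiC (ℓ + k.1) (c : ℕ × ℕ), pcmem k c.1 c.2⟩).1)
        (lam₁.card - 1),
       by
        have hpos : 0 < lam₁.card := Finset.card_pos.2 ⟨(c : ℕ × ℕ), c.2⟩
        omega⟩ with hGdef
  -- for injective T, the `min` collapses
  have hGval : ∀ (T : lam.cells → Fin lam.card), Function.Injective T →
      ∀ (k : Fin (n - 2 * ℓ)) (c : lam₁.cells),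
      ((G T k c) : ℕ) =
        adjv (T ⟨(0, ℓ + k.1), cellJmem k⟩).1
          (T ⟨phiC (ℓ + k.1) (c : ℕ × ℕ), pcmem k c.1 c.2⟩).1 := by
    intro T hT k c
    have hne : (T ⟨phiC (ℓ + k.1) (c : ℕ × ℕ), pcmem k c.1 c.2⟩).1 ≠
        (T ⟨(0, ℓ + k.1), cellJmem k⟩).1 := by
      intro h
      have := hT (Fin.ext h)
      exact pcne k c.1 c.2 (congrArg Subtype.val this)
    have hb1 : (T ⟨phiC (ℓ + k.1) (c : ℕ × ℕ), pcmem k c.1 c.2⟩).1 < n :=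
      lt_of_lt_of_eq (T _).2 hcard
    have hb2 : (T ⟨(0, ℓ + k.1), cellJmem k⟩).1 < n :=
      lt_of_lt_of_eq (T _).2 hcard
    have hlt := adjv_lt hb1 hne hb2
    show min _ _ = _
    omega
  -- `G T k` is a SYT of `lam₁` when `T` is a SYT of `lam`
  have hGsyt : ∀ (T : lam.cells → Fin lam.card),
      (Function.Bijective T ∧
        ∀ c₁ c₂ : lam.cells, (c₁ : ℕ × ℕ).1 ≤ (c₂ : ℕ × ℕ).1 →
          (c₁ : ℕ × ℕ).2 ≤ (c₂ : ℕ × ℕ).2 → c₁ ≠ c₂ → T c₁ < T c₂) →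
      ∀ k : Fin (n - 2 * ℓ),
      (Function.Bijective (G T k) ∧
        ∀ c₁ c₂ : lam₁.cells, (c₁ : ℕ × ℕ).1 ≤ (c₂ : ℕ × ℕ).1 →
          (c₁ : ℕ × ℕ).2 ≤ (c₂ : ℕ × ℕ).2 → c₁ ≠ c₂ → G T k c₁ < G T k c₂) := by
    intro T hT k
    have hTinj : Function.Injective T := hT.1.1
    have hvne : ∀ c : lam₁.cells,
        (T ⟨phiC (ℓ + k.1) (c : ℕ × ℕ), pcmem k c.1 c.2⟩).1 ≠
        (T ⟨(0, ℓ + k.1), cellJmem k⟩).1 := by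
      intro c h
      exact pcne k c.1 c.2 (congrArg Subtype.val (hTinj (Fin.ext h)))
    have hmono : ∀ c₁ c₂ : lam₁.cells, (c₁ : ℕ × ℕ).1 ≤ (c₂ : ℕ × ℕ).1 →
        (c₁ : ℕ × ℕ).2 ≤ (c₂ : ℕ × ℕ).2 → c₁ ≠ c₂ → G T k c₁ < G T k c₂ := by
      intro c₁ c₂ h1 h2 hne
      have hord := pcord k c₁.1 c₂.1 c₁.2 c₂.2 h1 h2
      have hpcne : (⟨phiC (ℓ + k.1) (c₁ : ℕ × ℕ), pcmem k c₁.1 c₁.2⟩ : lam.cells) ≠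
          ⟨phiC (ℓ + k.1) (c₂ : ℕ × ℕ), pcmem k c₂.1 c₂.2⟩ := by
        intro h
        exact hne (Subtype.ext (pcinj k c₁.1 c₂.1 (congrArg Subtype.val h)))
      have hlt := hT.2 _ _ hord.1 hord.2 hpcne
      rw [Fin.lt_def] at hlt ⊢
      rw [hGval T hTinj k c₁, hGval T hTinj k c₂]
      exact adjv_lt_adjv hlt (hvne c₁) (hvne c₂)
    refine ⟨?_, hmono⟩
    have hGinj : Function.Injective (G T k) := by
      intro c₁ c₂ h
      have hval := congrArg Fin.val h
      rw [hGval T hTinj k c₁, hGval T hTinj k c₂] at hval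
      have := adjv_inj (hvne c₁) (hvne c₂) hval
      have := hTinj (Fin.ext this)
      exact Subtype.ext (pcinj k c₁.1 c₂.1 (congrArg Subtype.val this))
    rw [Fintype.bijective_iff_injective_and_card]
    refine ⟨hGinj, ?_⟩
    simp [Fintype.card_coe]
  -- the "deleted column" is recoverable: key two-sided contradiction
  have hkk : ∀ (Ta : lam.cells → Fin lam.card),
      (Function.Injective Ta ∧
        ∀ c₁ c₂ : lam.cells, (c₁ : ℕ × ℕ).1 ≤ (c₂ : ℕ × ℕ).1 →
          (c₁ : ℕ × ℕ).2 ≤ (c₂ : ℕ × ℕ).2 → c₁ ≠ c₂ → Ta c₁ < Ta c₂) →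
      ∀ (Tb : lam.cells → Fin lam.card),
      (Function.Injective Tb ∧
        ∀ c₁ c₂ : lam.cells, (c₁ : ℕ × ℕ).1 ≤ (c₂ : ℕ × ℕ).1 →
          (c₁ : ℕ × ℕ).2 ≤ (c₂ : ℕ × ℕ).2 → c₁ ≠ c₂ → Tb c₁ < Tb c₂) →
      ∀ (ka kb : Fin (n - 2 * ℓ)), G Ta ka = G Tb kb →
        (Ta ⟨(0, ℓ + ka.1), cellJmem ka⟩).1 = (Tb ⟨(0, ℓ + kb.1), cellJmem kb⟩).1 →
        ka.1 < kb.1 → False := by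
    intro Ta hTa Tb hTb ka kb hg hm hab
    have hkb := kb.2
    -- the cell (0, ℓ + ka) lies in lam₁
    have hc₀ : (0, ℓ + ka.1) ∈ lam₁.cells := by
      rw [hmem₁]
      refine ⟨cellJmem ka, ?_⟩
      intro hh
      rw [Prod.mk.injEq] at hh
      omega
    have hval := congrArg Fin.val (congrFun hg ⟨(0, ℓ + ka.1), hc₀⟩)
    rw [hGval Ta hTa.1 ka _, hGval Tb hTb.1 kb _] at hval
    have hphia : phiC (ℓ + ka.1) (((⟨(0, ℓ + ka.1), hc₀⟩ : lam₁.cells)) : ℕ × ℕ) =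
        (0, ℓ + ka.1 + 1) := by
      show phiC (ℓ + ka.1) (0, ℓ + ka.1) = _
      unfold phiC
      rw [if_pos ⟨rfl, le_refl _⟩]
    have hphib : phiC (ℓ + kb.1) (((⟨(0, ℓ + ka.1), hc₀⟩ : lam₁.cells)) : ℕ × ℕ) =
        (0, ℓ + ka.1) := by
      show phiC (ℓ + kb.1) (0, ℓ + ka.1) = _
      unfold phiC
      rw [if_neg]
      rintro ⟨-, hh⟩
      simp only at hh
      omega
    simp only [hphia, hphib] at hval
    have hmema : (0, ℓ + ka.1 + 1) ∈ lam.cells := by rw [hmemlam, hrow]; omega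
    -- restate the value equation with clean membership proofs (defeq by proof irrelevance)
    have hval2 : adjv (Ta ⟨(0, ℓ + ka.1), cellJmem ka⟩).1 (Ta ⟨(0, ℓ + ka.1 + 1), hmema⟩).1 =
        adjv (Tb ⟨(0, ℓ + kb.1), cellJmem kb⟩).1 (Tb ⟨(0, ℓ + ka.1), cellJmem ka⟩).1 := hval
    -- values around the marked cells
    have hlta : (Ta ⟨(0, ℓ + ka.1), cellJmem ka⟩).1 < (Ta ⟨(0, ℓ + ka.1 + 1), hmema⟩).1 := by
      have h := hTa.2 ⟨(0, ℓ + ka.1), cellJmem ka⟩ ⟨(0, ℓ + ka.1 + 1), hmema⟩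
        (le_refl 0) (show ℓ + ka.1 ≤ ℓ + ka.1 + 1 by omega) ?_
      · exact h
      · intro hh
        have h2 := congrArg (fun z : lam.cells => (z : ℕ × ℕ).2) hh
        simp only at h2
        omega
    have hltb : (Tb ⟨(0, ℓ + ka.1), cellJmem ka⟩).1 < (Tb ⟨(0, ℓ + kb.1), cellJmem kb⟩).1 := by
      have h := hTb.2 ⟨(0, ℓ + ka.1), cellJmem ka⟩ ⟨(0, ℓ + kb.1), cellJmem kb⟩
        (le_refl 0) (show ℓ + ka.1 ≤ ℓ + kb.1 by omega) ?_
      · exact h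
      · intro hh
        have h2 := congrArg (fun z : lam.cells => (z : ℕ × ℕ).2) hh
        simp only at h2
        omega
    unfold adjv at hval2
    split_ifs at hval2 <;> omega
  -- now the counting argument
  unfold numSYT
  have hmain : Nat.card ({f : lam.cells → Fin lam.card //
      Function.Bijective f ∧
      ∀ c₁ c₂ : lam.cells, (c₁ : ℕ × ℕ).1 ≤ (c₂ : ℕ × ℕ).1 →
        (c₁ : ℕ × ℕ).2 ≤ (c₂ : ℕ × ℕ).2 → c₁ ≠ c₂ → f c₁ < f c₂} × Fin (n - 2 * ℓ)) ≤
      Nat.card ({f : lam₁.cells → Fin lam₁.card //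
      Function.Bijective f ∧
      ∀ c₁ c₂ : lam₁.cells, (c₁ : ℕ × ℕ).1 ≤ (c₂ : ℕ × ℕ).1 →
        (c₁ : ℕ × ℕ).2 ≤ (c₂ : ℕ × ℕ).2 → c₁ ≠ c₂ → f c₁ < f c₂} × Fin n) := by
    apply Nat.card_le_card_of_injective
      (fun p => (⟨G p.1.1 p.2, hGsyt p.1.1 p.1.2 p.2⟩,
        ⟨(p.1.1 ⟨(0, ℓ + p.2.1), cellJmem p.2⟩).1,
          lt_of_lt_of_eq (p.1.1 ⟨(0, ℓ + p.2.1), cellJmem p.2⟩).2 hcard⟩))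
    rintro ⟨⟨T₁, hT₁⟩, k₁⟩ ⟨⟨T₂, hT₂⟩, k₂⟩ h
    simp only [Prod.mk.injEq, Subtype.mk.injEq, Fin.mk.injEq] at h
    obtain ⟨hg, hm⟩ := h
    -- first, the marked columns agree
    have hk : k₁ = k₂ := by
      rcases lt_trichotomy k₁.1 k₂.1 with hlt | heq | hlt
      · exact (hkk T₁ ⟨hT₁.1.1, hT₁.2⟩ T₂ ⟨hT₂.1.1, hT₂.2⟩ k₁ k₂ hg hm hlt).elim
      · exact Fin.ext heq
      · exact (hkk T₂ ⟨hT₂.1.1, hT₂.2⟩ T₁ ⟨hT₁.1.1, hT₁.2⟩ k₂ k₁ hg.symm hm.symm hlt).elim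
    subst hk
    -- then, the tableaux agree
    have hTeq : T₁ = T₂ := by
      funext c
      obtain ⟨⟨a, b⟩, hab⟩ := c
      by_cases hc : (a, b) = ((0, ℓ + k₁.1) : ℕ × ℕ)
      · have : (⟨(a, b), hab⟩ : lam.cells) = ⟨(0, ℓ + k₁.1), cellJmem k₁⟩ := Subtype.ext hc
        rw [this]
        exact Fin.ext hm
      · -- find the preimage cell in lam₁
        have hmm := (hmemlam a b).1 hab
        have hpre : ∃ p : ℕ × ℕ, ∃ hp : p ∈ lam₁.cells, phiC (ℓ + k₁.1) p = (a, b) := by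
          rcases Nat.eq_zero_or_pos a with ha | ha
          · subst ha
            by_cases hb : ℓ + k₁.1 < b
            · refine ⟨(0, b - 1), ?_, ?_⟩
              · rw [hmem₁]
                constructor
                · rw [hmemlam, hrow]; rw [hrow] at hmm; omega
                · intro hh; rw [Prod.mk.injEq] at hh; rw [hrow] at hmm
                  have hk₁ := k₁.2; omega
              · unfold phiC
                rw [if_pos ⟨rfl, show ℓ + k₁.1 ≤ b - 1 by omega⟩]
                have hbb : b - 1 + 1 = b := by omega
                rw [hbb]
            · refine ⟨(0, b), ?_, ?_⟩
              · rw [hmem₁]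
                constructor
                · exact hab
                · intro hh; rw [Prod.mk.injEq] at hh
                  have hk₁ := k₁.2
                  rw [Prod.mk.injEq] at hc
                  omega
              · unfold phiC
                rw [if_neg]
                rintro ⟨-, hh⟩
                simp only at hh
                rw [Prod.mk.injEq] at hc
                omega
          · refine ⟨(a, b), ?_, ?_⟩
            · rw [hmem₁]
              exact ⟨hab, by intro hh; rw [Prod.mk.injEq] at hh; omega⟩
            · unfold phiC
              rw [if_neg]
              rintro ⟨hh, -⟩
              simp only at hh
              omega
        obtain ⟨p, hp, hphi⟩ := hpre
        have hval := congrArg Fin.val (congrFun hg ⟨p, hp⟩)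
        rw [hGval T₁ hT₁.1.1 k₁ _, hGval T₂ hT₂.1.1 k₁ _] at hval
        simp only [hphi] at hval
        have hval2 : adjv (T₁ ⟨(0, ℓ + k₁.1), cellJmem k₁⟩).1 (T₁ ⟨(a, b), hab⟩).1 =
            adjv (T₂ ⟨(0, ℓ + k₁.1), cellJmem k₁⟩).1 (T₂ ⟨(a, b), hab⟩).1 := hval
        have hne₁ : (T₁ ⟨(a, b), hab⟩).1 ≠ (T₁ ⟨(0, ℓ + k₁.1), cellJmem k₁⟩).1 := by
          intro hh
          exact hc (congrArg Subtype.val (hT₁.1.1 (Fin.ext hh)))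
        have hne₂ : (T₂ ⟨(a, b), hab⟩).1 ≠ (T₂ ⟨(0, ℓ + k₁.1), cellJmem k₁⟩).1 := by
          intro hh
          exact hc (congrArg Subtype.val (hT₂.1.1 (Fin.ext hh)))
        rw [hm] at hval2
        refine Fin.ext (adjv_inj ?_ hne₂ hval2)
        rw [← hm]
        exact hne₁
    subst hTeq
    rfl
  rw [Nat.card_prod, Nat.card_prod] at hmain
  have hf1 : Nat.card (Fin (n - 2 * ℓ)) = n - 2 * ℓ :=
    Nat.card_eq_fintype_card.trans (Fintype.card_fin _)
  have hf2 : Nat.card (Fin n) = n := Nat.card_eq_fintype_card.trans (Fintype.card_fin _)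
  rw [hf1, hf2] at hmain
  calc (n - 2 * ℓ) * Nat.card {f : lam.cells → Fin lam.card //
      Function.Bijective f ∧
      ∀ c₁ c₂ : lam.cells, (c₁ : ℕ × ℕ).1 ≤ (c₂ : ℕ × ℕ).1 →
        (c₁ : ℕ × ℕ).2 ≤ (c₂ : ℕ × ℕ).2 → c₁ ≠ c₂ → f c₁ < f c₂}
      = Nat.card {f : lam.cells → Fin lam.card //
      Function.Bijective f ∧
      ∀ c₁ c₂ : lam.cells, (c₁ : ℕ × ℕ).1 ≤ (c₂ : ℕ × ℕ).1 →
        (c₁ : ℕ × ℕ).2 ≤ (c₂ : ℕ × ℕ).2 → c₁ ≠ c₂ → f c₁ < f c₂} * (n - 2 * ℓ) :=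
      mul_comm _ _
    _ ≤ Nat.card {f : lam₁.cells → Fin lam₁.card //
      Function.Bijective f ∧
      ∀ c₁ c₂ : lam₁.cells, (c₁ : ℕ × ℕ).1 ≤ (c₂ : ℕ × ℕ).1 →
        (c₁ : ℕ × ℕ).2 ≤ (c₂ : ℕ × ℕ).2 → c₁ ≠ c₂ → f c₁ < f c₂} * n := hmain
    _ = n * Nat.card {f : lam₁.cells → Fin lam₁.card //
      Function.Bijective f ∧
      ∀ c₁ c₂ : lam₁.cells, (c₁ : ℕ × ℕ).1 ≤ (c₂ : ℕ × ℕ).1 →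
        (c₁ : ℕ × ℕ).2 ≤ (c₂ : ℕ × ℕ).2 → c₁ ≠ c₂ → f c₁ < f c₂} := mul_comm _ _

/-- if the first row of a partition λ of n has length n − ℓ with
    ℓ < n/2, and λ₁ is obtained by deleting the last cell of the first row,
    then dim ρ_{λ₁} ≥ ((n − 2ℓ)/n)·dim ρ_λ. -/
theorem stmt4 (n ℓ : ℕ) (hn : 0 < n) (hℓ : 2 * ℓ < n)
    (lam lam₁ : YoungDiagram)
    (hcard : lam.card = n)
    (hrow : lam.rowLen 0 = n - ℓ)
    (hdel : lam₁.cells = lam.cells.erase (0, lam.rowLen 0 - 1)) :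
    (((n : ℝ) - 2 * ℓ) / n) * numSYT lam ≤ (numSYT lam₁ : ℝ) := by
  have key := key_ineq n ℓ hℓ lam lam₁ hcard hrow hdel
  rw [div_mul_eq_mul_div, div_le_iff₀ (by exact_mod_cast hn : (0:ℝ) < n)]
  have hcast : ((n : ℝ) - 2 * ℓ) = ((n - 2 * ℓ : ℕ) : ℝ) := by
    rw [Nat.cast_sub (by omega)]
    push_cast; ring
  rw [hcast, mul_comm (numSYT lam₁ : ℝ)]
  exact_mod_cast key
end

section
/- Let W be an irreducible representation of S_M. If the Young diagram of W has first row (or column) of length M − ℓ with ℓ < M/2, then the restriction of W to the stabilizer S_{M−1} of a point contains an irreducible subrepresentation V with dim V ≥ ((M − 2ℓ)/M)·dim W. -/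
namespace Stmt9Aux

def IsSYT (μ : YoungDiagram) (f : μ.cells → Fin μ.card) : Prop :=
  Function.Bijective f ∧
    ∀ c₁ c₂ : μ.cells, (c₁ : ℕ × ℕ).1 ≤ (c₂ : ℕ × ℕ).1 →
      (c₁ : ℕ × ℕ).2 ≤ (c₂ : ℕ × ℕ).2 → c₁ ≠ c₂ → f c₁ < f c₂

lemma numSYT_eq (μ : YoungDiagram) : numSYT μ = Nat.card {f // IsSYT μ f} := rfl

lemma mem_iff' (μ : YoungDiagram) (c : ℕ × ℕ) : c ∈ μ ↔ c.2 < μ.rowLen c.1 := by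
  obtain ⟨i, j⟩ := c
  exact YoungDiagram.mem_iff_lt_rowLen

lemma row1_bound (μ : YoungDiagram) {c : ℕ × ℕ} (hc : c ∈ μ) (h1 : 1 ≤ c.1) :
    c.2 < μ.rowLen 1 :=
  lt_of_lt_of_le ((mem_iff' μ c).mp hc) (μ.rowLen_anti 1 c.1 h1)

lemma rowLen01_le (μ : YoungDiagram) : μ.rowLen 0 + μ.rowLen 1 ≤ μ.card := by
  classical
  have hsub : μ.row 0 ∪ μ.row 1 ⊆ μ.cells := by
    intro c hc
    rcases Finset.mem_union.mp hc with h | h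
    · exact (YoungDiagram.mem_row_iff.mp h).1
    · exact (YoungDiagram.mem_row_iff.mp h).1
  have hdisj : Disjoint (μ.row 0) (μ.row 1) := by
    rw [Finset.disjoint_left]
    intro c h0 h1
    have := (YoungDiagram.mem_row_iff.mp h0).2
    have := (YoungDiagram.mem_row_iff.mp h1).2
    omega
  calc μ.rowLen 0 + μ.rowLen 1 = (μ.row 0).card + (μ.row 1).card := by
        rw [μ.rowLen_eq_card, μ.rowLen_eq_card]
    _ = (μ.row 0 ∪ μ.row 1).card := (Finset.card_union_of_disjoint hdisj).symm
    _ ≤ μ.card := Finset.card_le_card hsub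

/-! ### Row case construction -/

variable (lam : YoungDiagram)

/-- shift map on cells: delete cell `(0,j)` of the first row, shifting later
first-row cells left (as a map from the smaller diagram to the bigger one). -/
def gcell (j : ℕ) (c : ℕ × ℕ) : ℕ × ℕ :=
  if c.1 = 0 ∧ j ≤ c.2 then (0, c.2 + 1) else c

lemma gcell_fst (j : ℕ) (c : ℕ × ℕ) : (gcell j c).1 = c.1 := by
  unfold gcell; split
  · next h => exact h.1.symm
  · rfl

lemma gcell_ne (j : ℕ) (c : ℕ × ℕ) : gcell j c ≠ (0, j) := by
  unfold gcell; split
  · next h =>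
    intro hc
    have : c.2 + 1 = j := congrArg Prod.snd hc
    omega
  · next h =>
    intro hc
    subst hc
    exact h ⟨rfl, le_refl _⟩

lemma gcell_inj (j : ℕ) : Function.Injective (gcell j) := by
  intro x y h
  unfold gcell at h
  split at h <;> split at h <;> rename_i h1 h2
  · have e1 : x.2 + 1 = y.2 + 1 := congrArg Prod.snd h
    have : x.2 = y.2 := by omega
    exact Prod.ext (h1.1.trans h2.1.symm) this
  · exfalso
    have e1 : (0:ℕ) = y.1 := congrArg Prod.fst h
    have e2 : x.2 + 1 = y.2 := congrArg Prod.snd h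
    exact h2 ⟨e1.symm, by omega⟩
  · exfalso
    have e1 : x.1 = 0 := congrArg Prod.fst h
    have e2 : x.2 = y.2 + 1 := congrArg Prod.snd h
    exact h1 ⟨e1, by omega⟩
  · exact h

/-- The diagram obtained by removing the corner at the end of the first row. -/
def nuD (hs : lam.rowLen 1 < lam.rowLen 0) : YoungDiagram where
  cells := lam.cells.erase (0, lam.rowLen 0 - 1)
  isLowerSet := by
    intro y x hxy hy
    simp only [Finset.coe_erase, Set.mem_diff, Finset.mem_coe, Set.mem_singleton_iff] at hy ⊢
    obtain ⟨hy1, hy2⟩ := hy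
    refine ⟨lam.isLowerSet hxy hy1, ?_⟩
    intro hx
    subst hx
    obtain ⟨h1, h2⟩ := hxy
    apply hy2
    by_cases hy0 : y.1 = 0
    · have : y.2 < lam.rowLen 0 := by
        have := (mem_iff' lam y).mp hy1
        rwa [hy0] at this
      have : y.2 = lam.rowLen 0 - 1 := by
        simp only at h2
        omega
      exact Prod.ext hy0 this
    · exfalso
      have : y.2 < lam.rowLen 1 := row1_bound lam hy1 (by omega)
      simp only at h2
      omega

lemma nuD_cells (hs : lam.rowLen 1 < lam.rowLen 0) :
    (nuD lam hs).cells = lam.cells.erase (0, lam.rowLen 0 - 1) := rfl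

lemma corner_mem (hs : lam.rowLen 1 < lam.rowLen 0) :
    (0, lam.rowLen 0 - 1) ∈ lam.cells := by
  rw [YoungDiagram.mem_cells, mem_iff' lam]
  simp only
  omega

lemma nuD_card (hs : lam.rowLen 1 < lam.rowLen 0) :
    (nuD lam hs).card = lam.card - 1 := by
  show ((nuD lam hs).cells).card = lam.card - 1
  rw [nuD_cells, Finset.card_erase_of_mem (corner_mem lam hs)]

lemma mem_nuD (hs : lam.rowLen 1 < lam.rowLen 0) (c : ℕ × ℕ) :
    c ∈ (nuD lam hs).cells ↔ c ≠ (0, lam.rowLen 0 - 1) ∧ c ∈ lam.cells := by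
  rw [nuD_cells]; exact Finset.mem_erase

lemma cj_mem (j : ℕ) (hj2 : j ≤ lam.rowLen 0 - 1) (hs : lam.rowLen 1 < lam.rowLen 0) :
    (0, j) ∈ lam.cells := by
  rw [YoungDiagram.mem_cells, mem_iff' lam]
  simp only
  omega

lemma gcell_mem (j : ℕ) (hj2 : j ≤ lam.rowLen 0 - 1) (hs : lam.rowLen 1 < lam.rowLen 0)
    {c : ℕ × ℕ} (hc : c ∈ (nuD lam hs).cells) : gcell j c ∈ lam.cells := by
  rw [mem_nuD] at hc
  obtain ⟨hne, hmem⟩ := hc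
  unfold gcell; split
  · next h =>
    rw [YoungDiagram.mem_cells, mem_iff' lam]
    simp only
    have hlt : c.2 < lam.rowLen 0 := by
      have := (mem_iff' lam c).mp hmem
      rwa [h.1] at this
    have : c.2 ≠ lam.rowLen 0 - 1 := by
      intro hh
      exact hne (Prod.ext h.1 hh)
    omega
  · exact hmem

/-- value deletion (standardization) map. -/
def dropN (a x : ℕ) : ℕ := if x < a then x else x - 1

lemma dropN_lt {n a x : ℕ} (ha : a < n) (hx : x < n) (hne : x ≠ a) :
    dropN a x < n - 1 := by
  unfold dropN; split <;> omega

lemma dropN_strictMono {a x y : ℕ} (h : x < y) (hx : x ≠ a) (hy : y ≠ a) :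
    dropN a x < dropN a y := by
  unfold dropN; split <;> split <;> omega

lemma dropN_inj {a x y : ℕ} (h : dropN a x = dropN a y) (hx : x ≠ a) (hy : y ≠ a) :
    x = y := by
  unfold dropN at h; split at h <;> split at h <;> omega

section SMap

variable (hs : lam.rowLen 1 < lam.rowLen 0) (j : ℕ)
  (hj1 : lam.rowLen 1 ≤ j) (hj2 : j ≤ lam.rowLen 0 - 1)
  (T : {f : lam.cells → Fin lam.card // IsSYT lam f})

/-- the cell map as a map of subtypes -/
def gmap : ((nuD lam hs).cells : Finset (ℕ × ℕ)) → (lam.cells : Finset (ℕ × ℕ)) :=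
  fun c => ⟨gcell j c.val, gcell_mem lam j hj2 hs c.2⟩

lemma T_gmap_ne (c : ((nuD lam hs).cells : Finset (ℕ × ℕ))) :
    (T.val (gmap lam hs j hj2 c)).val ≠ (T.val ⟨(0, j), cj_mem lam j hj2 hs⟩).val := by
  intro h
  have h2 : T.val (gmap lam hs j hj2 c) = T.val ⟨(0, j), cj_mem lam j hj2 hs⟩ := Fin.ext h
  have := T.2.1.1 h2
  have : gcell j c.val = (0, j) := congrArg Subtype.val this
  exact gcell_ne j c.val this

/-- the induced map on standard tableaux, deleting the value at cell `(0,j)`. -/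
def Sfun : ((nuD lam hs).cells : Finset (ℕ × ℕ)) → Fin ((nuD lam hs).card) :=
  fun c =>
    ⟨dropN (T.val ⟨(0, j), cj_mem lam j hj2 hs⟩).val (T.val (gmap lam hs j hj2 c)).val, by
      rw [nuD_card lam hs]
      exact dropN_lt (T.val _).isLt (T.val _).isLt (T_gmap_ne lam hs j hj2 T c)⟩

lemma Sfun_inj : Function.Injective (Sfun lam hs j hj2 T) := by
  intro c₁ c₂ h
  have hv : dropN (T.val ⟨(0, j), cj_mem lam j hj2 hs⟩).val (T.val (gmap lam hs j hj2 c₁)).val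
      = dropN (T.val ⟨(0, j), cj_mem lam j hj2 hs⟩).val (T.val (gmap lam hs j hj2 c₂)).val :=
    congrArg Fin.val h
  have := dropN_inj hv (T_gmap_ne lam hs j hj2 T c₁) (T_gmap_ne lam hs j hj2 T c₂)
  have := T.2.1.1 (Fin.ext this)
  have : gcell j c₁.val = gcell j c₂.val := congrArg Subtype.val this
  exact Subtype.ext (gcell_inj j this)

include hj1 in
lemma Sfun_isSYT : IsSYT (nuD lam hs) (Sfun lam hs j hj2 T) := by
  constructor
  · rw [Fintype.bijective_iff_injective_and_card]
    refine ⟨Sfun_inj lam hs j hj2 T, ?_⟩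
    rw [Fintype.card_coe, Fintype.card_fin]
  · intro c₁ c₂ h1 h2 hne
    have hgne : gmap lam hs j hj2 c₁ ≠ gmap lam hs j hj2 c₂ := by
      intro h
      have : gcell j c₁.val = gcell j c₂.val := congrArg Subtype.val h
      exact hne (Subtype.ext (gcell_inj j this))
    -- componentwise monotonicity of gcell
    have hfst : (gcell j c₁.val).1 ≤ (gcell j c₂.val).1 := by
      rw [gcell_fst, gcell_fst]; exact h1
    have hsnd : (gcell j c₁.val).2 ≤ (gcell j c₂.val).2 := by
      have hm2 := ((mem_nuD lam hs c₂.val).mp c₂.2).2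
      unfold gcell
      split <;> split <;> rename_i ha hb
      · simp only; omega
      · exfalso
        -- c₁ shifted, c₂ not
        by_cases hb0 : (c₂.val).1 = 0
        · exact hb ⟨hb0, le_trans (le_trans ha.2 h2) (le_refl _)⟩
        · have : (c₂.val).2 < lam.rowLen 1 := row1_bound lam hm2 (by omega)
          have := ha.2
          omega
      · simp only; omega
      · exact h2
    have := T.2.2 (gmap lam hs j hj2 c₁) (gmap lam hs j hj2 c₂) hfst hsnd hgne
    exact dropN_strictMono this (T_gmap_ne lam hs j hj2 T c₁) (T_gmap_ne lam hs j hj2 T c₂)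

end SMap

section Inj

variable (hs : lam.rowLen 1 < lam.rowLen 0)

lemma j_lt_case (j₁ j₂ : ℕ) (hj12 : j₁ ≤ lam.rowLen 0 - 1) (hj22 : j₂ ≤ lam.rowLen 0 - 1)
    (T₁ T₂ : {f : lam.cells → Fin lam.card // IsSYT lam f})
    (ha : T₁.val ⟨(0, j₁), cj_mem lam j₁ hj12 hs⟩ = T₂.val ⟨(0, j₂), cj_mem lam j₂ hj22 hs⟩)
    (hS : Sfun lam hs j₁ hj12 T₁ = Sfun lam hs j₂ hj22 T₂)
    (hlt : j₁ < j₂) : False := by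
  have hr0 : 0 < lam.rowLen 0 := by omega
  have hm0 : (0, j₁) ∈ lam.cells := cj_mem lam j₁ hj12 hs
  have hm1 : (0, j₁ + 1) ∈ lam.cells := cj_mem lam (j₁ + 1) (by omega) hs
  have hm2 : (0, j₂) ∈ lam.cells := cj_mem lam j₂ hj22 hs
  have hc₀ : (0, j₁) ∈ (nuD lam hs).cells := by
    rw [mem_nuD]
    refine ⟨?_, hm0⟩
    intro h
    have := congrArg Prod.snd h
    simp only at this
    omega
  set c₀ : ((nuD lam hs).cells : Finset (ℕ × ℕ)) := ⟨(0, j₁), hc₀⟩ with hc₀def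
  have hgc1 : gmap lam hs j₁ hj12 c₀ = ⟨(0, j₁ + 1), hm1⟩ := by
    apply Subtype.ext
    show gcell j₁ (0, j₁) = (0, j₁ + 1)
    rw [gcell, if_pos ⟨rfl, le_refl _⟩]
  have hgc2 : gmap lam hs j₂ hj22 c₀ = ⟨(0, j₁), hm0⟩ := by
    apply Subtype.ext
    show gcell j₂ (0, j₁) = (0, j₁)
    rw [gcell, if_neg]
    rintro ⟨-, h⟩
    simp only at h
    omega
  have hSc := congrArg (fun f => (f c₀).val) hS
  simp only [Sfun] at hSc
  have hx1 := T_gmap_ne lam hs j₁ hj12 T₁ c₀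
  have hx2 := T_gmap_ne lam hs j₂ hj22 T₂ c₀
  rw [congrArg Fin.val ha] at hSc hx1
  have heq := dropN_inj hSc hx1 hx2
  rw [hgc1] at heq
  rw [hgc2] at heq hx2
  -- heq : (T₁ ⟨(0,j₁+1)⟩).val = (T₂ ⟨(0,j₁)⟩).val
  have h1 : T₁.val ⟨(0, j₁), hm0⟩ < T₁.val ⟨(0, j₁ + 1), hm1⟩ := by
    apply T₁.2.2
    · exact le_refl _
    · show j₁ ≤ j₁ + 1; omega
    · intro h
      have := congrArg (fun x => (x.val).2) h
      simp only at this
      omega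
  have h2 : T₂.val ⟨(0, j₁), hm0⟩ < T₂.val ⟨(0, j₂), hm2⟩ := by
    apply T₂.2.2
    · exact le_refl _
    · show j₁ ≤ j₂; omega
    · intro h
      have := congrArg (fun x => (x.val).2) h
      simp only at this
      omega
  have ha' := congrArg Fin.val ha
  have h1' : (T₁.val ⟨(0, j₁), hm0⟩ : Fin lam.card).val < (T₁.val ⟨(0, j₁ + 1), hm1⟩).val := h1
  have h2' : (T₂.val ⟨(0, j₁), hm0⟩ : Fin lam.card).val < (T₂.val ⟨(0, j₂), hm2⟩).val := h2
  omega

lemma T_eq (j : ℕ) (hj1 : lam.rowLen 1 ≤ j) (hj2 : j ≤ lam.rowLen 0 - 1)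
    (T₁ T₂ : {f : lam.cells → Fin lam.card // IsSYT lam f})
    (ha : T₁.val ⟨(0, j), cj_mem lam j hj2 hs⟩ = T₂.val ⟨(0, j), cj_mem lam j hj2 hs⟩)
    (hS : Sfun lam hs j hj2 T₁ = Sfun lam hs j hj2 T₂) : T₁ = T₂ := by
  apply Subtype.ext
  funext c
  by_cases hc : c.val = (0, j)
  · have : c = ⟨(0, j), cj_mem lam j hj2 hs⟩ := Subtype.ext hc
    rw [this]
    exact ha
  · -- find the preimage cell c'
    have hcl : c.val ∈ lam.cells := c.2
    have hclt : (c.val).2 < lam.rowLen (c.val).1 := (mem_iff' lam c.val).mp hcl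
    obtain ⟨hc'mem, hg⟩ :
        ∃ h : (if (c.val).1 = 0 ∧ j < (c.val).2 then (0, (c.val).2 - 1) else c.val)
            ∈ (nuD lam hs).cells,
          gcell j (if (c.val).1 = 0 ∧ j < (c.val).2 then (0, (c.val).2 - 1) else c.val)
            = c.val := by
      split
      · next h =>
        obtain ⟨h0, hjlt⟩ := h
        have hcr : (c.val).2 < lam.rowLen 0 := by rwa [h0] at hclt
        refine ⟨?_, ?_⟩
        · rw [mem_nuD]
          constructor
          · intro hh
            have := congrArg Prod.snd hh
            simp only at this
            omega
          · exact cj_mem lam _ (by omega) hs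
        · rw [gcell, if_pos ⟨rfl, by omega⟩]
          have : (c.val).2 - 1 + 1 = (c.val).2 := by omega
          rw [this]
          exact Prod.ext h0.symm rfl
      · next h =>
        refine ⟨?_, ?_⟩
        · rw [mem_nuD]
          refine ⟨?_, hcl⟩
          intro hh
          apply hc
          have h2 := congrArg Prod.snd hh
          have h1 := congrArg Prod.fst hh
          simp only at h1 h2
          have : ¬ ((c.val).1 = 0 ∧ j < (c.val).2) := h
          apply Prod.ext h1
          omega
        · rw [gcell, if_neg]
          rintro ⟨h0, hle⟩
          apply hc
          have : ¬ ((c.val).1 = 0 ∧ j < (c.val).2) := h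
          apply Prod.ext h0
          omega
    set c' : ((nuD lam hs).cells : Finset (ℕ × ℕ)) := ⟨_, hc'mem⟩ with hc'def
    have hgm : gmap lam hs j hj2 c' = c := Subtype.ext hg
    have hSc := congrArg (fun f => (f c').val) hS
    simp only [Sfun] at hSc
    have hx1 := T_gmap_ne lam hs j hj2 T₁ c'
    have hx2 := T_gmap_ne lam hs j hj2 T₂ c'
    rw [congrArg Fin.val ha] at hSc hx1
    have heq := dropN_inj hSc hx1 hx2
    rw [hgm] at heq
    exact Fin.ext heq

end Inj

lemma key_row (lam : YoungDiagram) (hs : lam.rowLen 1 < lam.rowLen 0) :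
    ∃ ν : YoungDiagram, ν.card = lam.card - 1 ∧ ν.cells ⊆ lam.cells ∧
      (lam.rowLen 0 - lam.rowLen 1) * numSYT lam ≤ lam.card * numSYT ν := by
  classical
  refine ⟨nuD lam hs, nuD_card lam hs, ?_, ?_⟩
  · rw [nuD_cells]; exact Finset.erase_subset _ _
  rw [numSYT_eq, numSYT_eq]
  have hrs : 0 < lam.rowLen 0 - lam.rowLen 1 := by omega
  have hJ2 : ∀ i : Fin (lam.rowLen 0 - lam.rowLen 1),
      lam.rowLen 1 + i.val ≤ lam.rowLen 0 - 1 := by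
    intro i
    have := i.isLt
    omega
  set Φ : Fin (lam.rowLen 0 - lam.rowLen 1) × {f // IsSYT lam f}
      → Fin lam.card × {f // IsSYT (nuD lam hs) f} :=
    fun p => (p.2.val ⟨(0, lam.rowLen 1 + p.1.val), cj_mem lam _ (hJ2 p.1) hs⟩,
      ⟨Sfun lam hs (lam.rowLen 1 + p.1.val) (hJ2 p.1) p.2,
        Sfun_isSYT lam hs (lam.rowLen 1 + p.1.val) (Nat.le_add_right _ _) (hJ2 p.1) p.2⟩)
    with hΦdef
  have hΦ : Function.Injective Φ := by
    rintro ⟨i₁, T₁⟩ ⟨i₂, T₂⟩ h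
    have ha := congrArg Prod.fst h
    have hS : Sfun lam hs (lam.rowLen 1 + i₁.val) (hJ2 i₁) T₁
        = Sfun lam hs (lam.rowLen 1 + i₂.val) (hJ2 i₂) T₂ :=
      congrArg (fun q => (Prod.snd q).val) h
    simp only [hΦdef] at ha
    have hjeq : lam.rowLen 1 + i₁.val = lam.rowLen 1 + i₂.val := by
      by_contra hne
      rcases Nat.lt_or_ge (lam.rowLen 1 + i₁.val) (lam.rowLen 1 + i₂.val) with hlt | hge
      · exact j_lt_case lam hs _ _ (hJ2 i₁) (hJ2 i₂) T₁ T₂ ha hS hlt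
      · have hlt : lam.rowLen 1 + i₂.val < lam.rowLen 1 + i₁.val := by omega
        exact j_lt_case lam hs _ _ (hJ2 i₂) (hJ2 i₁) T₂ T₁ ha.symm hS.symm hlt
    have hieq : i₁ = i₂ := Fin.ext (by omega)
    subst hieq
    have hT : T₁ = T₂ :=
      T_eq lam hs (lam.rowLen 1 + i₁.val) (Nat.le_add_right _ _) (hJ2 i₁) T₁ T₂ ha hS
    rw [hT]
  have hineq := Nat.card_le_card_of_injective Φ hΦ
  rw [Nat.card_prod, Nat.card_prod,
    Nat.card_eq_fintype_card (α := Fin (lam.rowLen 0 - lam.rowLen 1)),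
    Nat.card_eq_fintype_card (α := Fin lam.card), Fintype.card_fin, Fintype.card_fin] at hineq
  exact hineq

end Stmt9Aux

namespace Stmt9Aux

lemma card_transpose (μ : YoungDiagram) : μ.transpose.card = μ.card := by
  show (μ.transpose.cells).card = μ.cells.card
  simp [YoungDiagram.transpose]

/-- transposing cells -/
def cellEquiv (μ : YoungDiagram) :
    (μ.transpose.cells : Finset (ℕ × ℕ)) ≃ (μ.cells : Finset (ℕ × ℕ)) where
  toFun c := ⟨c.val.swap, by
    have := c.2
    rwa [YoungDiagram.mem_cells, YoungDiagram.mem_transpose] at this⟩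
  invFun c := ⟨c.val.swap, by
    rw [YoungDiagram.mem_cells, YoungDiagram.mem_transpose, Prod.swap_swap]
    exact c.2⟩
  left_inv c := Subtype.ext (Prod.swap_swap _)
  right_inv c := Subtype.ext (Prod.swap_swap _)

lemma isSYT_transpose_map (μ : YoungDiagram)
    (f : {x // x ∈ μ.transpose.cells} → Fin μ.transpose.card)
    (hf : IsSYT μ.transpose f) :
    IsSYT μ (fun c => Fin.cast (card_transpose μ) (f ((cellEquiv μ).symm c))) := by
  obtain ⟨hbij, hmono⟩ := hf
  constructor
  · exact (finCongr (card_transpose μ)).bijective.comp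
      (hbij.comp (cellEquiv μ).symm.bijective)
  · intro c₁ c₂ h1 h2 hne
    have key := hmono ((cellEquiv μ).symm c₁) ((cellEquiv μ).symm c₂) h2 h1
      (fun hh => hne ((cellEquiv μ).symm.injective hh))
    rw [Fin.lt_def, Fin.coe_cast, Fin.coe_cast]
    exact key

lemma numSYT_transpose_le (μ : YoungDiagram) : numSYT μ.transpose ≤ numSYT μ := by
  rw [numSYT_eq, numSYT_eq]
  set Ψ : {f // IsSYT μ.transpose f} → {f // IsSYT μ f} :=
    fun p => ⟨fun c => Fin.cast (card_transpose μ) (p.val ((cellEquiv μ).symm c)),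
        isSYT_transpose_map μ p.val p.2⟩ with hΨdef
  have hΨ : Function.Injective Ψ := by
    intro p q h
    simp only [hΨdef] at h
    apply Subtype.ext
    funext x
    have hx := congrArg (fun g => (g.val ((cellEquiv μ) x)).val) h
    simp only at hx
    rw [Equiv.symm_apply_apply] at hx
    exact Fin.ext hx
  exact Nat.card_le_card_of_injective Ψ hΨ

lemma numSYT_transpose (μ : YoungDiagram) : numSYT μ.transpose = numSYT μ := by
  refine le_antisymm (numSYT_transpose_le μ) ?_
  have := numSYT_transpose_le μ.transpose
  rwa [YoungDiagram.transpose_transpose] at this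

lemma nat_to_real (M ℓ : ℕ) (hM : 0 < M) (hℓ : 2 * ℓ < M) (x y : ℕ)
    (h : (M - 2 * ℓ) * x ≤ M * y) :
    (((M : ℝ) - 2 * ℓ) / M) * x ≤ (y : ℝ) := by
  have hM' : (0 : ℝ) < M := by exact_mod_cast hM
  rw [div_mul_eq_mul_div, div_le_iff₀ hM']
  have h' : (((M - 2 * ℓ) * x : ℕ) : ℝ) ≤ ((M * y : ℕ) : ℝ) := Nat.cast_le.mpr h
  push_cast [Nat.cast_sub (le_of_lt hℓ)] at h'
  linarith

end Stmt9Aux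


open Stmt9Aux in
/-- let W = ρ_λ be an irreducible representation of S_M whose
    Young diagram λ has first row (or first column) of length M − ℓ with
    ℓ < M/2.  By the branching rule, the restriction of W to S_{M−1}
    decomposes multiplicity-free into the ρ_{λ⁻} over partitions λ⁻ of M−1
    obtained by removing an inner corner of λ; hence the restriction contains
    an irreducible subrepresentation V (a corner-removal ν ⊆ λ of size M−1)
    with dim V ≥ ((M − 2ℓ)/M)·dim W. -/
theorem stmt9 (M ℓ : ℕ) (hM : 0 < M) (hℓ : 2 * ℓ < M)
    (lam : YoungDiagram) (hcard : lam.card = M)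
    (hrow : lam.rowLen 0 = M - ℓ ∨ lam.colLen 0 = M - ℓ) :
    ∃ ν : YoungDiagram, ν.card = M - 1 ∧ ν.cells ⊆ lam.cells ∧
      (((M : ℝ) - 2 * ℓ) / M) * numSYT lam ≤ (numSYT ν : ℝ) := by
  have main : ∀ lam' : YoungDiagram, lam'.card = M → lam'.rowLen 0 = M - ℓ →
      ∃ ν : YoungDiagram, ν.card = M - 1 ∧ ν.cells ⊆ lam'.cells ∧
        (M - 2 * ℓ) * numSYT lam' ≤ M * numSYT ν := by
    intro lam' hc hr
    have h01 := rowLen01_le lam'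
    rw [hc] at h01
    have hs : lam'.rowLen 1 < lam'.rowLen 0 := by omega
    obtain ⟨ν, h1, h2, h3⟩ := key_row lam' hs
    refine ⟨ν, by omega, h2, ?_⟩
    have hle : M - 2 * ℓ ≤ lam'.rowLen 0 - lam'.rowLen 1 := by omega
    calc (M - 2 * ℓ) * numSYT lam'
        ≤ (lam'.rowLen 0 - lam'.rowLen 1) * numSYT lam' :=
          Nat.mul_le_mul_right _ hle
      _ ≤ lam'.card * numSYT ν := h3
      _ = M * numSYT ν := by rw [hc]
  rcases hrow with hr | hcol
  · obtain ⟨ν, h1, h2, h3⟩ := main lam hcard hr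
    exact ⟨ν, h1, h2, nat_to_real M ℓ hM hℓ _ _ h3⟩
  · have hc' : lam.transpose.card = M := by rw [card_transpose, hcard]
    have hr' : lam.transpose.rowLen 0 = M - ℓ := by
      rw [YoungDiagram.rowLen_transpose]; exact hcol
    obtain ⟨ν', h1, h2, h3⟩ := main lam.transpose hc' hr'
    refine ⟨ν'.transpose, by rw [card_transpose]; exact h1, ?_, ?_⟩
    · have hle : ν' ≤ lam.transpose := YoungDiagram.cells_subset_iff.mp h2
      have := YoungDiagram.transpose_mono hle
      rw [YoungDiagram.transpose_transpose] at this
      exact YoungDiagram.cells_subset_iff.mpr this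
    · rw [numSYT_transpose ν']
      rw [numSYT_transpose lam] at h3
      exact nat_to_real M ℓ hM hℓ _ _ h3
end
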